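/- arXiv:1311.2870 — 3 statements merged into one kernel-verified Lean document; each statement's English description precedes it below -/
import Mathlib

section
/- Let 0 < s < 1. There exists a constant C depending only on s such that for all x, y ≥ 0, |⟨x⟩^s - ⟨y⟩^s| ≤ C·⟨x - y⟩ / (⟨x⟩^(1-s) + ⟨y⟩^(1-s)), where ⟨x⟩ = (1 + x²)^(1/2). -/
/-- Japanese bracket. -/
noncomputable def jb (x : ℝ) : ℝ := Real.sqrt (1 + x ^ 2)

lemma jb_one_le (x : ℝ) : 1 ≤ jb x := by
  have h := Real.sqrt_le_sqrt (show (1:ℝ) ≤ 1 + x^2 by nlinarith [sq_nonneg x])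
  simpa [jb] using h

lemma jb_key (s : ℝ) (hs0 : 0 < s) (hs1 : s < 1) (x y : ℝ) (hy : 0 ≤ y) (hxy : y ≤ x) :
    jb x ^ s - jb y ^ s ≤ 2 * jb (x - y) / (jb x ^ (1 - s) + jb y ^ (1 - s)) := by
  set a := jb x with ha
  set b := jb y with hb
  have ha1 : 1 ≤ a := jb_one_le x
  have hb1 : 1 ≤ b := jb_one_le y
  have ha0 : (0:ℝ) < a := lt_of_lt_of_le one_pos ha1
  have hb0 : (0:ℝ) < b := lt_of_lt_of_le one_pos hb1
  have hba : b ≤ a := Real.sqrt_le_sqrt (by nlinarith)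
  have hyb : y ≤ b := by
    calc y = Real.sqrt (y^2) := (Real.sqrt_sq hy).symm
      _ ≤ Real.sqrt (1 + y^2) := Real.sqrt_le_sqrt (by linarith)
  have hb2 : b ^ 2 = 1 + y ^ 2 := Real.sq_sqrt (by positivity)
  have h3 : a ≤ b + (x - y) := by
    calc a ≤ Real.sqrt ((b + (x - y))^2) := Real.sqrt_le_sqrt (by nlinarith)
      _ = b + (x - y) := Real.sqrt_sq (by nlinarith)
  have h4 : x - y ≤ jb (x - y) := by
    calc x - y = Real.sqrt ((x-y)^2) := (Real.sqrt_sq (by linarith)).symm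
      _ ≤ Real.sqrt (1 + (x-y)^2) := Real.sqrt_le_sqrt (by linarith)
  have hjb0 : (0:ℝ) < jb (x - y) := lt_of_lt_of_le one_pos (jb_one_le _)
  have hsum : (0:ℝ) < a ^ (1 - s) + b ^ (1 - s) := by positivity
  rw [le_div_iff₀ hsum]
  have e1 : a ^ s * a ^ (1 - s) = a := by
    rw [← Real.rpow_add ha0]; simp
  have e2 : b ^ s * b ^ (1 - s) = b := by
    rw [← Real.rpow_add hb0]; simp
  have h1 : a ^ s * b ^ (1 - s) ≤ a := by
    calc a ^ s * b ^ (1 - s) ≤ a ^ s * a ^ (1 - s) := by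
          apply mul_le_mul_of_nonneg_left _ (Real.rpow_nonneg ha0.le s)
          exact Real.rpow_le_rpow hb0.le hba (by linarith)
      _ = a := e1
  have h2 : b ≤ b ^ s * a ^ (1 - s) := by
    calc b = b ^ s * b ^ (1 - s) := e2.symm
      _ ≤ b ^ s * a ^ (1 - s) := by
          apply mul_le_mul_of_nonneg_left _ (Real.rpow_nonneg hb0.le s)
          exact Real.rpow_le_rpow hb0.le hba (by linarith)
  have hab : a - b ≤ jb (x - y) := by linarith
  nlinarith [e1, e2]

theorem stmt_5 (s : ℝ) (hs0 : 0 < s) (hs1 : s < 1) :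
    ∃ C : ℝ, 0 < C ∧ ∀ x y : ℝ, 0 ≤ x → 0 ≤ y →
      |jb x ^ s - jb y ^ s| ≤ C * jb (x - y) / (jb x ^ (1 - s) + jb y ^ (1 - s)) := by
  refine ⟨2, two_pos, fun x y hx hy => ?_⟩
  have hsymm : jb (x - y) = jb (y - x) := by
    rw [jb, jb]; ring_nf
  rcases le_total y x with h | h
  · have hba : jb y ^ s ≤ jb x ^ s := by
      apply Real.rpow_le_rpow (Real.sqrt_nonneg _) _ hs0.le
      exact Real.sqrt_le_sqrt (by nlinarith)
    rw [abs_of_nonneg (by linarith)]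
    exact jb_key s hs0 hs1 x y hy h
  · have hba : jb x ^ s ≤ jb y ^ s := by
      apply Real.rpow_le_rpow (Real.sqrt_nonneg _) _ hs0.le
      exact Real.sqrt_le_sqrt (by nlinarith)
    rw [abs_of_nonpos (by linarith), hsymm, neg_sub, add_comm]
    exact jb_key s hs0 hs1 y x hx h
end

section
/- Let 0 < s < 1, K > 1, and x, y ≥ 0 with |x - y| ≤ x/K. Then |⟨x⟩^s - ⟨y⟩^s| ≤ (s/(K-1)^(1-s))·⟨x - y⟩^s, where ⟨x⟩ = (1 + x²)^(1/2). -/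
open Complex in
lemma jb_eq_norm (t : ℝ) : jb t = ‖1 + t * I‖ := by
  simpa [jb] using (norm_add_mul_I 1 t).symm

lemma abs_le_jb (t : ℝ) : |t| ≤ jb t := by
  simpa [jb_eq_norm] using Complex.abs_im_le_norm (1 + t * Complex.I)

lemma jb_pos (t : ℝ) : 0 < jb t := by
  unfold jb; positivity

lemma jb_le_jb {a b : ℝ} (h : |b| ≤ |a|) : jb b ≤ jb a :=
  Real.sqrt_le_sqrt (by linarith [sq_le_sq.2 h])

lemma jb_sub_comm (a b : ℝ) : jb (a - b) = jb (b - a) := by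
  simp only [jb, ← neg_sub a b, neg_sq]

lemma abs_jb_sub_jb_le (a b : ℝ) : |jb a - jb b| ≤ |a - b| := by
  simpa [jb_eq_norm, ← sub_mul, ← Complex.ofReal_sub, Complex.norm_real] using
    abs_norm_sub_norm_le (1 + a * Complex.I) (1 + b * Complex.I)

lemma rpow_sub_rpow_le_mul_rpow_sub_one {s a b : ℝ} (hs0 : 0 ≤ s) (hs1 : s ≤ 1) (ha : 0 ≤ a)
    (hb : 0 < b) : a ^ s - b ^ s ≤ s * b ^ (s - 1) * (a - b) := by
  have bernoulli : (a / b) ^ s ≤ 1 + s * (a / b - 1) := by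
    simpa using rpow_one_add_le_one_add_mul_self (s := a / b - 1)
      (by linarith [div_nonneg ha hb.le]) hs0 hs1
  rw [Real.div_rpow ha hb.le, div_le_iff₀ (by positivity)] at bernoulli
  rw [Real.rpow_sub_one hb.ne']
  field_simp at bernoulli ⊢
  linarith

lemma rpow_sub_one_mul_eq_div_rpow_mul_rpow {B d : ℝ} (s : ℝ) (hB : 0 < B) (hd : 0 ≤ d) :
    B ^ (s - 1) * d = (d / B) ^ (1 - s) * d ^ s := by
  rw [Real.div_rpow hd hB.le, div_mul_eq_mul_div, ← Real.rpow_add' hd (by norm_num),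
    sub_add_cancel, Real.rpow_one, ← neg_sub, Real.rpow_neg hB.le]
  ring

lemma jb_rpow_sub_jb_rpow_le {s c a b : ℝ} (hs0 : 0 ≤ s) (hs1 : s ≤ 1) (hc : 0 < c)
    (hba : b ≤ a) (hgap : c * (a - b) ≤ b) :
    jb a ^ s - jb b ^ s ≤ s / c ^ (1 - s) * jb (a - b) ^ s := by
  have hd : 0 ≤ a - b := sub_nonneg.2 hba
  have hjb := jb_pos b
  have hratio : (a - b) / jb b ≤ c⁻¹ := by
    rw [div_le_iff₀ hjb, inv_mul_eq_div, le_div_iff₀' hc]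
    exact hgap.trans ((le_abs_self b).trans (abs_le_jb b))
  calc jb a ^ s - jb b ^ s ≤ s * jb b ^ (s - 1) * (jb a - jb b) :=
        rpow_sub_rpow_le_mul_rpow_sub_one hs0 hs1 (jb_pos a).le (jb_pos b)
    _ ≤ s * jb b ^ (s - 1) * (a - b) := by
        have hlip := (le_abs_self _).trans (abs_jb_sub_jb_le a b)
        rw [abs_of_nonneg hd] at hlip
        gcongr
    _ = s * ((a - b) / jb b) ^ (1 - s) * (a - b) ^ s := by
        rw [mul_assoc, rpow_sub_one_mul_eq_div_rpow_mul_rpow s hjb hd, mul_assoc]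
    _ ≤ s * c⁻¹ ^ (1 - s) * jb (a - b) ^ s := by
        gcongr
        exact (le_abs_self _).trans (abs_le_jb _)
    _ = s / c ^ (1 - s) * jb (a - b) ^ s := by
        rw [Real.inv_rpow hc.le, div_eq_mul_inv]

lemma abs_jb_rpow_sub_jb_rpow_le {s c a b : ℝ} (hs0 : 0 ≤ s) (hs1 : s ≤ 1) (hc : 0 < c)
    (hgap : c * |a - b| ≤ min a b) :
    |jb a ^ s - jb b ^ s| ≤ s / c ^ (1 - s) * jb (a - b) ^ s := by
  wlog hba : b ≤ a generalizing a b
  · rw [abs_sub_comm, jb_sub_comm]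
    exact this (by rwa [abs_sub_comm, min_comm]) (le_of_not_ge hba)
  rw [abs_of_nonneg (sub_nonneg.2 hba), min_eq_right hba] at hgap
  have hmono : jb b ≤ jb a := jb_le_jb
    (abs_le_abs_of_nonneg ((mul_nonneg hc.le (sub_nonneg.2 hba)).trans hgap) hba)
  rw [abs_of_nonneg (sub_nonneg.2 (Real.rpow_le_rpow (jb_pos b).le hmono hs0))]
  exact jb_rpow_sub_jb_rpow_le hs0 hs1 hc hba hgap

theorem stmt_6_general (s K x y : ℝ) (hs0 : 0 < s) (hs1 : s < 1) (hK : 1 < K)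
    (hxy : |x - y| ≤ x / K) :
    |jb x ^ s - jb y ^ s| ≤ (s / (K - 1) ^ (1 - s)) * jb (x - y) ^ s := by
  have hKxy : K * |x - y| ≤ x := by
    rwa [le_div_iff₀ (by linarith), mul_comm] at hxy
  have hgap : (K - 1) * |x - y| ≤ min x y := by
    apply le_min <;> linarith [abs_nonneg (x - y), le_abs_self (x - y)]
  exact abs_jb_rpow_sub_jb_rpow_le hs0.le hs1.le (by linarith) hgap

theorem stmt_6 (s K x y : ℝ) (hs0 : 0 < s) (hs1 : s < 1) (hK : 1 < K)
    (hx : 0 ≤ x) (hy : 0 ≤ y) (hxy : |x - y| ≤ x / K) :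
    |jb x ^ s - jb y ^ s| ≤ (s / (K - 1) ^ (1 - s)) * jb (x - y) ^ s :=
  stmt_6_general s K x y hs0 hs1 hK hxy
end

section
/- Fix s ∈ (0,1), a ∈ (0,s), δ' > 0. For integers 1 ≤ k < ℓ and reals t ≥ 1, τ ≥ 1 with τ ≤ t, |k·t - ℓ·τ| < t/2, define ν(t,τ) = δ'·(τ^{-a} - t^{-a}). Then ν(t,τ) ≥ a·δ' / (2^{1-a}·3^a·(k·t)^a·ℓ^{1-a}). -/
/-!
By concavity of `x ↦ x ^ a` (Bernoulli's inequality for `0 ≤ a ≤ 1`),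
`τ ^ (-a) - t ^ (-a) = τ ^ (-a) (1 - (τ / t) ^ a) ≥ a (t - τ) / (τ ^ a t)`.
On the resonant interval the gap to the echo time `k t / ℓ` is at most `t / (2ℓ)`, so
`t - τ ≥ t / (2ℓ)` and `τ ≤ 3 k t / (2ℓ)`; substituting both gives the bound.
-/

open Real

theorem Real.mul_sub_div_le_rpow_neg_sub_rpow_neg {a τ t : ℝ} (ha0 : 0 ≤ a) (ha1 : a ≤ 1)
    (hτ : 0 < τ) (hτt : τ ≤ t) :
    a * (t - τ) / (τ ^ a * t) ≤ τ ^ (-a) - t ^ (-a) := by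
  have ht : 0 < t := hτ.trans_le hτt
  have hbern : (τ / t) ^ a ≤ 1 + a * (τ / t - 1) := by
    simpa using rpow_one_add_le_one_add_mul_self (s := τ / t - 1)
      (by linarith [div_nonneg hτ.le ht.le]) ha0 ha1
  have hsplit : τ ^ (-a) - t ^ (-a) = (1 - (τ / t) ^ a) / τ ^ a := by
    rw [rpow_neg hτ.le, rpow_neg ht.le, div_rpow hτ.le ht.le]
    have : 0 < τ ^ a := rpow_pos_of_pos hτ a
    have : 0 < t ^ a := rpow_pos_of_pos ht a
    field_simp
  calc a * (t - τ) / (τ ^ a * t) = a * (1 - τ / t) / τ ^ a := by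
        field_simp
    _ ≤ (1 - (τ / t) ^ a) / τ ^ a := by gcongr; linarith
    _ = τ ^ (-a) - t ^ (-a) := hsplit.symm

section Resonance

variable {k ℓ t τ : ℝ}

theorem le_two_mul_mul_sub_of_abs_mul_sub_mul_lt (hkℓ : k + 1 ≤ ℓ) (ht : 0 ≤ t)
    (hres : |k * t - ℓ * τ| < t / 2) : t ≤ 2 * ℓ * (t - τ) := by
  nlinarith [(abs_lt.mp hres).1]

theorem le_three_mul_div_of_abs_mul_sub_mul_lt (hk : 1 ≤ k) (hℓ : 0 < ℓ) (ht : 0 ≤ t)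
    (hres : |k * t - ℓ * τ| < t / 2) : τ ≤ 3 * (k * t) / (2 * ℓ) := by
  rw [le_div_iff₀ (by positivity)]
  nlinarith [(abs_lt.mp hres).1, mul_le_mul_of_nonneg_right hk ht]

end Resonance

theorem two_mul_mul_rpow_div (a x : ℝ) {ℓ : ℝ} (hx : 0 ≤ x) (hℓ : 0 < ℓ) :
    2 * ℓ * (3 * x / (2 * ℓ)) ^ a = 2 ^ (1 - a) * 3 ^ a * x ^ a * ℓ ^ (1 - a) := by
  rw [div_rpow (by positivity) (by positivity), mul_rpow (by norm_num) hx,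
    mul_rpow (by norm_num) hℓ.le, rpow_sub two_pos, rpow_sub hℓ, rpow_one, rpow_one]
  have : 0 < (2 : ℝ) ^ a := rpow_pos_of_pos two_pos a
  have : 0 < ℓ ^ a := rpow_pos_of_pos hℓ a
  field_simp

theorem stmt_16_general (s a δ' : ℝ) (hs1 : s < 1) (ha0 : 0 < a) (has : a < s)
    (hδ' : 0 < δ') (k ℓ : ℤ) (hk : 1 ≤ k) (hkℓ : k < ℓ) (t τ : ℝ)
    (hτ : 1 ≤ τ) (hτt : τ ≤ t) (hres : |(k : ℝ) * t - (ℓ : ℝ) * τ| < t / 2) :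
    δ' * (τ ^ (-a) - t ^ (-a)) ≥
      a * δ' / (2 ^ (1 - a) * 3 ^ a * ((k : ℝ) * t) ^ a * (ℓ : ℝ) ^ (1 - a)) := by
  have hτ0 : (0 : ℝ) < τ := by linarith
  have ht0 : (0 : ℝ) < t := by linarith
  have hkr : (1 : ℝ) ≤ k := by exact_mod_cast hk
  have hkℓr : (k : ℝ) + 1 ≤ ℓ := by exact_mod_cast hkℓ
  have hℓ0 : (0 : ℝ) < ℓ := by linarith
  have hgap := le_two_mul_mul_sub_of_abs_mul_sub_mul_lt hkℓr ht0.le hres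
  have hecho := le_three_mul_div_of_abs_mul_sub_mul_lt hkr hℓ0 ht0.le hres
  have hconcave := mul_sub_div_le_rpow_neg_sub_rpow_neg ha0.le (has.trans hs1).le hτ0 hτt
  rw [← two_mul_mul_rpow_div a _ (by positivity) hℓ0, ge_iff_le, mul_comm a,
    mul_div_assoc]
  gcongr
  calc a / (2 * ℓ * (3 * (k * t) / (2 * ℓ)) ^ a)
      ≤ a / (2 * ℓ * τ ^ a) := by gcongr
    _ = a * t / (τ ^ a * (2 * ℓ * t)) := by field_simp
    _ ≤ a * (2 * ℓ * (t - τ)) / (τ ^ a * (2 * ℓ * t)) := by gcongr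
    _ = a * (t - τ) / (τ ^ a * t) := by field_simp
    _ ≤ τ ^ (-a) - t ^ (-a) := hconcave

theorem stmt_16 (s a δ' : ℝ) (hs0 : 0 < s) (hs1 : s < 1) (ha0 : 0 < a) (has : a < s)
    (hδ' : 0 < δ') (k ℓ : ℤ) (hk : 1 ≤ k) (hkℓ : k < ℓ) (t τ : ℝ)
    (hτ : 1 ≤ τ) (hτt : τ ≤ t) (hres : |(k : ℝ) * t - (ℓ : ℝ) * τ| < t / 2) :
    δ' * (τ ^ (-a) - t ^ (-a)) ≥
      a * δ' / (2 ^ (1 - a) * 3 ^ a * ((k : ℝ) * t) ^ a * (ℓ : ℝ) ^ (1 - a)) :=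
  stmt_16_general s a δ' hs1 ha0 has hδ' k ℓ hk hkℓ t τ hτ hτt hres
end
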